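/- Let P be a Markov kernel on a measurable space X with invariant probability measure π, let Δ ⊆ X be measurable, and define the positive kernel P_Δ(x, A) := 1_Δ(x) P(x, A). Let g : X → ℝ be measurable with ∫ g² dπ < ∞, and write Pg(x) = ∫ g(y) P(x, dy), P_Δ g = 1_Δ · Pg. Then ∫ (P_Δ g)² dπ = ∫ g² dπ − ∫ [ ∫ (g(y) − Pg(x))² P(x, dy) ] π(dx) − ∫_{Δᶜ} (Pg)² dπ. -/

import Mathlib

/-!
Invariance of `π` integrates the conditional second moment `x ↦ ∫ g² d(P x)` back to `∫ g² dπ`.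
Combined with the pointwise variance identity `∫ (g - Pg x)² d(P x) = ∫ g² d(P x) - (Pg x)²`,
this gives `∫ (conditional variance) dπ = ‖g‖²_π - ‖Pg‖²_π`, and `‖Pg‖²_π` splits into its parts
on `Δ` and `Δᶜ`.
-/

open MeasureTheory ProbabilityTheory

namespace MeasureTheory.Measure

variable {α β E : Type*} {mα : MeasurableSpace α} {mβ : MeasurableSpace β}
  [NormedAddCommGroup E] [NormedSpace ℝ E] {κ : Kernel α β} {μ : Measure α} {f : β → E}

lemma integrable_integral_of_integrable_comp (hf : Integrable f (κ ∘ₘ μ)) :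
    Integrable (fun x ↦ ∫ y, f y ∂κ x) μ := by
  rw [comp_eq_comp_const_apply] at hf
  simpa using hf.integral_comp

lemma integral_comp_eq_integral_integral (hf : Integrable f (κ ∘ₘ μ)) :
    ∫ y, f y ∂(κ ∘ₘ μ) = ∫ x, ∫ y, f y ∂κ x ∂μ := by
  rw [comp_eq_comp_const_apply] at hf ⊢
  simpa using Kernel.integral_comp hf

end MeasureTheory.Measure

namespace ProbabilityTheory.Kernel

variable {α E : Type*} {mα : MeasurableSpace α} [NormedAddCommGroup E]
  {κ : Kernel α α} {μ : Measure α} {f : α → E}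

lemma invariant_of_lintegral_eq (h : ∀ s, MeasurableSet s → ∫⁻ x, κ x s ∂μ = μ s) :
    κ.Invariant μ := by
  ext s hs
  rw [Measure.bind_apply hs κ.aemeasurable]
  exact h s hs

lemma Invariant.ae_integrable (hκ : κ.Invariant μ) (hf : Integrable f μ) :
    ∀ᵐ x ∂μ, Integrable f (κ x) :=
  Measure.ae_integrable_of_integrable_comp (hκ.def.symm ▸ hf)

variable [NormedSpace ℝ E]

lemma Invariant.integrable_integral (hκ : κ.Invariant μ) (hf : Integrable f μ) :
    Integrable (fun x ↦ ∫ y, f y ∂κ x) μ :=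
  Measure.integrable_integral_of_integrable_comp (hκ.def.symm ▸ hf)

lemma Invariant.integral_integral (hκ : κ.Invariant μ) (hf : Integrable f μ) :
    ∫ x, ∫ y, f y ∂κ x ∂μ = ∫ x, f x ∂μ := by
  conv_rhs => rw [← hκ.def]
  exact (Measure.integral_comp_eq_integral_integral (hκ.def.symm ▸ hf)).symm

end ProbabilityTheory.Kernel

lemma integral_sub_integral_sq {Ω : Type*} {_ : MeasurableSpace Ω} {ν : Measure Ω}
    [IsProbabilityMeasure ν] {g : Ω → ℝ} (hg : MemLp g 2 ν) :
    ∫ y, (g y - ∫ z, g z ∂ν) ^ 2 ∂ν = ∫ y, g y ^ 2 ∂ν - (∫ y, g y ∂ν) ^ 2 := by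
  rw [← variance_eq_integral hg.aemeasurable, variance_eq_sub hg]
  rfl

theorem stmt_10_general
    {X : Type*} [MeasurableSpace X]
    (P : Kernel X X) [IsMarkovKernel P]
    (π : Measure X)
    (hinv : ∀ A : Set X, MeasurableSet A → ∫⁻ x, P x A ∂π = π A)
    (Δ : Set X) (hΔ : MeasurableSet Δ)
    (g : X → ℝ) (hg : Measurable g)
    (hg2 : Integrable (fun x => (g x) ^ 2) π)
    (Pg : X → ℝ) (hPg : ∀ x, Pg x = ∫ y, g y ∂(P x)) :
    ∫ x, (Δ.indicator Pg x) ^ 2 ∂π =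
      ∫ x, (g x) ^ 2 ∂π -
      ∫ x, (∫ y, (g y - Pg x) ^ 2 ∂(P x)) ∂π -
      ∫ x in Δᶜ, (Pg x) ^ 2 ∂π := by
  have hP : P.Invariant π := Kernel.invariant_of_lintegral_eq hinv
  have hcondVar : ∀ᵐ x ∂π, ∫ y, (g y - Pg x) ^ 2 ∂(P x) = ∫ y, g y ^ 2 ∂(P x) - Pg x ^ 2 := by
    filter_upwards [hP.ae_integrable hg2] with x hx
    rw [hPg x]
    exact integral_sub_integral_sq ((memLp_two_iff_integrable_sq hg.aestronglyMeasurable).2 hx)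
  have hPg2 : Integrable (fun x => Pg x ^ 2) π := by
    have hPgm : StronglyMeasurable Pg := funext hPg ▸ hg.stronglyMeasurable.integral_kernel
    refine (hP.integrable_integral hg2).mono'
      (hPgm.measurable.pow_const 2).aestronglyMeasurable ?_
    filter_upwards [hcondVar] with x hx
    rw [Real.norm_of_nonneg (sq_nonneg _)]
    linarith [integral_nonneg (μ := P x) (f := fun y => (g y - Pg x) ^ 2) fun y => sq_nonneg _]
  have hkilled : ∫ x, (Δ.indicator Pg x) ^ 2 ∂π = ∫ x in Δ, Pg x ^ 2 ∂π := by
    rw [← integral_indicator hΔ]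
    congr 1
    ext x
    by_cases hx : x ∈ Δ <;> simp [hx]
  rw [hkilled, integral_congr_ae hcondVar, integral_sub (hP.integrable_integral hg2) hPg2,
    hP.integral_integral hg2, ← integral_add_compl hΔ hPg2]
  ring

/-- For the killed kernel `P_Δ g = 1_Δ · Pg`,
`‖P_Δ g‖²_π = ‖g‖²_π − E_π[conditional variance of g] − ‖1_{Δᶜ} Pg‖²_π`. -/
theorem stmt_10
    {X : Type*} [MeasurableSpace X]
    (P : Kernel X X) [IsMarkovKernel P]
    (π : Measure X) [IsProbabilityMeasure π]
    (hinv : ∀ A : Set X, MeasurableSet A → ∫⁻ x, P x A ∂π = π A)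
    (Δ : Set X) (hΔ : MeasurableSet Δ)
    (g : X → ℝ) (hg : Measurable g)
    (hg2 : Integrable (fun x => (g x) ^ 2) π)
    (Pg : X → ℝ) (hPg : ∀ x, Pg x = ∫ y, g y ∂(P x)) :
    ∫ x, (Δ.indicator Pg x) ^ 2 ∂π =
      ∫ x, (g x) ^ 2 ∂π -
      ∫ x, (∫ y, (g y - Pg x) ^ 2 ∂(P x)) ∂π -
      ∫ x in Δᶜ, (Pg x) ^ 2 ∂π :=
  stmt_10_general P π hinv Δ hΔ g hg hg2 Pg hPg
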